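/- Let A be an n×m matrix with c_1 = v·1_n where v is the value of A, let v_{-1} > v be the value of A_{-1}, and let I ⊆ [m] with 1 ∈ I, |I| ≥ 2. Suppose there exists x† ∈ S_n with (c_i)^T x† = v for all i ∈ I and suppose X* (Player 1's equilibrium set for A) is contained in the relative interior of S_n with x† ∈ X*. Let v̄_I be the value of the reduced game with columns {c_i : i ∈ I \ {1}} and let x̄ ∈ S_n be an equilibrium strategy of Player 1 for this reduced game, i.e., min_{i ∈ I\{1}} (c_i)^T x̄ = v̄_I. If v̄_I > v, then x̄ lies on the relative boundary of S_n. -/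

import Mathlib

noncomputable def colPay {n m : ℕ} (A : Matrix (Fin n) (Fin m) ℝ) (i : Fin m)
    (x : Fin n → ℝ) : ℝ := ∑ j, A j i * x j

noncomputable def minPay {n m : ℕ} (A : Matrix (Fin n) (Fin (m + 1)) ℝ)
    (x : Fin n → ℝ) : ℝ :=
  Finset.univ.inf' Finset.univ_nonempty fun i => colPay A i x

/-!
If `x̄` were in the relative interior of the simplex, we could move from the equilibrium `x†`
through `x̄` and a little beyond it, to `x♭ = θ x̄ + (1 - θ) x†` with `θ > 1`, without leaving the
simplex. Every column `c_i`, `i ∈ I \ {1}`, pays `v` at `x†` and at least `v̄_I > v` at `x̄`, so by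
affinity it pays strictly more than at `x̄` at `x♭`, contradicting the optimality of `x̄` in the
reduced game.
-/

open AffineMap

lemma exists_one_lt_lineMap_mem_stdSimplex {ι : Type*} [Fintype ι] {x y : ι → ℝ}
    (hx : x ∈ stdSimplex ℝ ι) (hpos : ∀ j, 0 < x j) (hy : y ∈ stdSimplex ℝ ι) :
    ∃ θ : ℝ, 1 < θ ∧ lineMap y x θ ∈ stdSimplex ℝ ι := by
  have : Nonempty ι := by
    by_contra h
    simpa [not_nonempty_iff.mp h] using hx.2
  -- overshoot by the smallest coordinate of `x`: then `θ x_j + (1 - θ) y_j ≥ x_j - x_{j₀} y_j ≥ 0`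
  obtain ⟨j₀, hj₀⟩ := Finite.exists_min x
  refine ⟨1 + x j₀, by linarith [hpos j₀], fun j => ?_, ?_⟩
  · obtain ⟨hy0, hy1⟩ := mem_Icc_of_mem_stdSimplex hy j
    have := hj₀ j
    simp only [lineMap_apply_module, Pi.add_apply, Pi.smul_apply, smul_eq_mul]
    nlinarith [hpos j₀]
  · simp only [lineMap_apply_module, Pi.add_apply, Pi.smul_apply, smul_eq_mul,
      Finset.sum_add_distrib, ← Finset.mul_sum, hx.2, hy.2]
    ring

lemma colPay_lineMap {n m : ℕ} (A : Matrix (Fin n) (Fin m) ℝ) (i : Fin m) (y x : Fin n → ℝ)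
    (θ : ℝ) : colPay A i (lineMap y x θ) = lineMap (colPay A i y) (colPay A i x) θ := by
  simp only [colPay, lineMap_apply_module, Pi.add_apply, Pi.smul_apply, smul_eq_mul,
    mul_add, Finset.sum_add_distrib, Finset.mul_sum]
  congr 1 <;> exact Finset.sum_congr rfl fun j _ => by ring

lemma lt_lineMap_of_lt {a b θ : ℝ} (hab : a < b) (hθ : 1 < θ) : b < lineMap a b θ := by
  rw [lineMap_apply_module, smul_eq_mul, smul_eq_mul]
  nlinarith

theorem stmt13_general {n m : ℕ} (A : Matrix (Fin (n + 1)) (Fin (m + 1)) ℝ) (v vbarI : ℝ)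
    -- the index set I
    (I : Finset (Fin (m + 1)))
    -- x† is an equilibrium of A at which all columns in I are tight
    (xdag : Fin (n + 1) → ℝ) (hxdagS : xdag ∈ stdSimplex ℝ (Fin (n + 1)))
    (hxdagI : ∀ i ∈ I, colPay A i xdag = v)
    -- vbarI is the value of the reduced game with columns I \ {1}
    (hubI : ∀ x ∈ stdSimplex ℝ (Fin (n + 1)), ∃ i ∈ I, i ≠ 0 ∧ colPay A i x ≤ vbarI)
    -- x̄ is an equilibrium strategy of Player 1 for the reduced game
    (xbar : Fin (n + 1) → ℝ) (hxbarS : xbar ∈ stdSimplex ℝ (Fin (n + 1)))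
    (hxbar : ∀ i ∈ I, i ≠ 0 → vbarI ≤ colPay A i xbar)
    (hvbarI : v < vbarI) :
    ∃ j : Fin (n + 1), xbar j = 0 := by
  by_contra! hne
  have hpos j : 0 < xbar j := (hxbarS.1 j).lt_of_ne (hne j).symm
  obtain ⟨θ, hθ, hflat⟩ := exists_one_lt_lineMap_mem_stdSimplex hxbarS hpos hxdagS
  obtain ⟨i, hiI, hi0, hle⟩ := hubI _ hflat
  have hgain : colPay A i xbar < colPay A i (lineMap xdag xbar θ) := by
    rw [colPay_lineMap]
    exact lt_lineMap_of_lt (by linarith [hxdagI i hiI, hxbar i hiI hi0]) hθ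
  linarith [hxbar i hiI hi0]

theorem stmt13 {n m : ℕ} (A : Matrix (Fin (n + 1)) (Fin (m + 1)) ℝ) (v vneg1 vbarI : ℝ)
    -- v is the value of the game A
    (hub : ∀ x ∈ stdSimplex ℝ (Fin (n + 1)), minPay A x ≤ v)
    (hach : ∃ x ∈ stdSimplex ℝ (Fin (n + 1)), minPay A x = v)
    -- the first column is v·1_n
    (hc1 : ∀ j, A j 0 = v)
    -- vneg1, the value of A_{-1}, exceeds v
    (hub1 : ∀ x ∈ stdSimplex ℝ (Fin (n + 1)), ∃ i : Fin (m + 1), i ≠ 0 ∧ colPay A i x ≤ vneg1)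
    (hach1 : ∃ x ∈ stdSimplex ℝ (Fin (n + 1)), ∀ i : Fin (m + 1), i ≠ 0 → vneg1 ≤ colPay A i x)
    (hv1 : v < vneg1)
    -- the index set I
    (I : Finset (Fin (m + 1))) (hI0 : (0 : Fin (m + 1)) ∈ I) (hIcard : 2 ≤ I.card)
    -- x† is an equilibrium of A at which all columns in I are tight
    (xdag : Fin (n + 1) → ℝ) (hxdagS : xdag ∈ stdSimplex ℝ (Fin (n + 1)))
    (hxdagNE : minPay A xdag = v)
    (hxdagI : ∀ i ∈ I, colPay A i xdag = v)
    -- X* is contained in the relative interior of S_n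
    (hfull : ∀ x ∈ stdSimplex ℝ (Fin (n + 1)), minPay A x = v → ∀ j, 0 < x j)
    -- vbarI is the value of the reduced game with columns I \ {1}
    (hubI : ∀ x ∈ stdSimplex ℝ (Fin (n + 1)), ∃ i ∈ I, i ≠ 0 ∧ colPay A i x ≤ vbarI)
    -- x̄ is an equilibrium strategy of Player 1 for the reduced game
    (xbar : Fin (n + 1) → ℝ) (hxbarS : xbar ∈ stdSimplex ℝ (Fin (n + 1)))
    (hxbar : ∀ i ∈ I, i ≠ 0 → vbarI ≤ colPay A i xbar)
    (hvbarI : v < vbarI) :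
    ∃ j : Fin (n + 1), xbar j = 0 :=
  stmt13_general A v vbarI I xdag hxdagS hxdagI hubI xbar hxbarS hxbar hvbarI
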